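/- Let x: M → H^{n+1} be a compact immersed hypersurface (upper half-space model) with ∂M on the horosphere H = {x_{n+1} = 1}, meeting H at constant angle θ. Along ∂M one has h(μ, μ) = H − sin θ Ĥ + (n−1) cos θ, where h and H are the second fundamental form and mean curvature of M, Ĥ is the mean curvature of ∂M inside H, and μ is the outward conormal. -/

import Mathlib

noncomputable section
open Real MeasureTheory

abbrev Vec (n : ℕ) : Type := EuclideanSpace ℝ (Fin (n + 1))
abbrev Par (n : ℕ) : Type := EuclideanSpace ℝ (Fin n)

def ht {n : ℕ} (p : Vec n) : ℝ := p (Fin.last n)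

def UHS (n : ℕ) : Set (Vec n) := {p | 0 < ht p}

def gbar {n : ℕ} (p : Vec n) (Y Z : Vec n) : ℝ := (inner ℝ Y Z : ℝ) / (ht p) ^ 2

def Ei (n : ℕ) (i : Fin (n + 1)) : Vec n := EuclideanSpace.single i 1

def elast (n : ℕ) : Vec n := Ei n (Fin.last n)

def LC {n : ℕ} (Y Z : Vec n → Vec n) (p : Vec n) : Vec n :=
  fderiv ℝ Z p (Y p) - ((Y p) (Fin.last n) / ht p) • Z p
    - ((Z p) (Fin.last n) / ht p) • Y p
    + ((inner ℝ (Y p) (Z p) : ℝ) / ht p) • elast n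

/-- Partial derivative of a map `ℝⁿ → ℝ^{n+1}` in the `i`-th coordinate direction. -/
def pd {n : ℕ} (i : Fin n) (f : Par n → Vec n) (u : Par n) : Vec n :=
  fderiv ℝ f u (EuclideanSpace.single i 1)

/-- Partial derivative of a scalar function on the parameter domain. -/
def pdR {n : ℕ} (i : Fin n) (f : Par n → ℝ) (u : Par n) : ℝ :=
  fderiv ℝ f u (EuclideanSpace.single i 1)

/-- Induced metric `g_{ij} = ḡ(∂_i x, ∂_j x)` of an immersion `x`. -/
def gmat {n : ℕ} (x : Par n → Vec n) (u : Par n) : Matrix (Fin n) (Fin n) ℝ :=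
  Matrix.of fun i j => gbar (x u) (pd i x u) (pd j x u)

/-- Laplace–Beltrami operator of the induced metric in local coordinates. -/
def lapBel {n : ℕ} (x : Par n → Vec n) (φ : Par n → ℝ) (u : Par n) : ℝ :=
  (1 / Real.sqrt (gmat x u).det) *
    ∑ i, pdR i (fun v =>
      Real.sqrt (gmat x v).det * ∑ j, (gmat x v)⁻¹ i j * pdR j φ v) u

/-- Ambient (hyperbolic) covariant derivative of a vector field `W` along the map `x`
in the direction `w` of the parameter domain. -/
def covDir {n : ℕ} (x : Par n → Vec n) (w : Par n) (W : Par n → Vec n) (u : Par n) :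
    Vec n :=
  fderiv ℝ W u w - ((fderiv ℝ x u w) (Fin.last n) / ht (x u)) • W u
    - ((W u) (Fin.last n) / ht (x u)) • fderiv ℝ x u w
    + ((inner ℝ (fderiv ℝ x u w) (W u) : ℝ) / ht (x u)) • elast n

/-- Second fundamental form `h_{ij} = ḡ(∇̄_{∂_i x} ν, ∂_j x)`. -/
def hmat {n : ℕ} (x ν : Par n → Vec n) (u : Par n) : Matrix (Fin n) (Fin n) ℝ :=
  Matrix.of fun i j =>
    gbar (x u) (covDir x (EuclideanSpace.single i 1) ν u) (pd j x u)

/-- Mean curvature `H = g^{ij} h_{ij}`. -/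
def meanCurv {n : ℕ} (x ν : Par n → Vec n) (u : Par n) : ℝ :=
  ((gmat x u)⁻¹ * hmat x ν u).trace

/-- Squared norm of the second fundamental form `|h|² = g^{ik} g^{jl} h_{ij} h_{kl}`. -/
def normh2 {n : ℕ} (x ν : Par n → Vec n) (u : Par n) : ℝ :=
  ((gmat x u)⁻¹ * hmat x ν u * (gmat x u)⁻¹ * (hmat x ν u).transpose).trace

section Aux

open Filter Topology

set_option maxHeartbeats 1000000

lemma euc_sum_apply' {κ : Type*} [Fintype κ] [DecidableEq κ] {ι : Type*} (s : Finset ι)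
    (f : ι → EuclideanSpace ℝ κ) (j : κ) : (∑ i ∈ s, f i) j = ∑ i ∈ s, f i j :=
  _root_.map_sum (EuclideanSpace.proj j : EuclideanSpace ℝ κ →L[ℝ] ℝ) f s

lemma clm_expand {m : ℕ} {E : Type*} [NormedAddCommGroup E] [NormedSpace ℝ E]
    (L : Par m →L[ℝ] E) (w : Par m) :
    L w = ∑ i, w i • L (EuclideanSpace.single i (1:ℝ)) := by
  have hw : w = ∑ i, w i • EuclideanSpace.single i (1:ℝ) := by
    ext j
    rw [euc_sum_apply']
    simp [EuclideanSpace.single_apply, PiLp.smul_apply]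
  conv_lhs => rw [hw]
  rw [_root_.map_sum]
  simp

lemma trace_aux {N : ℕ} (G H P : Matrix (Fin N) (Fin N) ℝ)
    (hG : P.transpose * G * P = 1) : (G⁻¹ * H).trace = (P.transpose * H * P).trace := by
  have hd : P.det * (G.det * P.det) = 1 := by
    have := congrArg Matrix.det hG
    simp [Matrix.det_mul, Matrix.det_transpose] at this
    linear_combination this
  have hP : IsUnit P.det := IsUnit.of_mul_eq_one _ hd
  have hPt : IsUnit P.transpose.det := by rwa [Matrix.det_transpose]
  have h1 : P.transpose * (G * P) = 1 := by rw [← Matrix.mul_assoc]; exact hG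
  have h2 : (P.transpose)⁻¹ = G * P := Matrix.inv_eq_right_inv h1
  have h3 : G * (P * P.transpose) = 1 := by
    calc G * (P * P.transpose) = (G * P) * P.transpose := by rw [Matrix.mul_assoc]
    _ = (P.transpose)⁻¹ * P.transpose := by rw [h2]
    _ = 1 := Matrix.nonsing_inv_mul _ hPt
  have h4 : G⁻¹ = P * P.transpose := Matrix.inv_eq_right_inv h3
  rw [h4, Matrix.mul_assoc, Matrix.trace_mul_comm]

lemma tang_deriv {N : ℕ} {E : Type*} [NormedAddCommGroup E] [NormedSpace ℝ E]
    {Ω : Set (Par N)} (hΩ : IsOpen Ω) {ρ : Par N → ℝ} {f : Par N → E} {u : Par N}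
    (hu : u ∈ Ω) (hρ : ContDiffAt ℝ (⊤ : ℕ∞) ρ u) (hρu : ρ u = 1)
    (hL : fderiv ℝ ρ u ≠ 0) (hf : DifferentiableAt ℝ f u)
    (hvanish : ∀ v ∈ Ω, ρ v = 1 → f v = 0)
    {w : Par N} (hw : fderiv ℝ ρ u w = 0) : fderiv ℝ f u w = 0 := by
  classical
  set L := fderiv ℝ ρ u with hLdef
  obtain ⟨z0, hz0⟩ : ∃ z0, L z0 ≠ 0 := by
    by_contra h; push_neg at h
    exact hL (ContinuousLinearMap.ext fun v => by simp [h v])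
  set z : Par N := (L z0)⁻¹ • z0 with hzdef
  have hLz : L z = 1 := by
    rw [hzdef, _root_.map_smul, smul_eq_mul, inv_mul_cancel₀ hz0]
  set Φ : Par N → Par N := fun v => v + (ρ v - L v) • z with hΦdef
  have hρd : HasFDerivAt ρ L u := (hρ.differentiableAt (by simp)).hasFDerivAt
  have hΦd : HasFDerivAt Φ (ContinuousLinearMap.id ℝ (Par N)) u := by
    have h2 : HasFDerivAt (fun v => ρ v - L v) (L - L) u := hρd.sub L.hasFDerivAt
    have h3 : HasFDerivAt (fun v => (ρ v - L v) • z) ((L - L).smulRight z) u :=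
      h2.smul_const z
    have h4 := (hasFDerivAt_id u).add h3
    convert h4 using 1 <;> ext v <;> simp [hΦdef]
  have hΦc : ContDiffAt ℝ (⊤ : ℕ∞) Φ u :=
    contDiffAt_id.add ((hρ.sub (L.contDiff.contDiffAt)).smul contDiffAt_const)
  have hΦs : HasStrictFDerivAt Φ
      ((ContinuousLinearEquiv.refl ℝ (Par N) : Par N ≃L[ℝ] Par N) :
        Par N →L[ℝ] Par N) u :=
    hΦc.hasStrictFDerivAt' (by rw [ContinuousLinearEquiv.coe_refl]; exact hΦd) (by simp)
  set ψ := hΦs.localInverse Φ _ u with hψdef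
  have hψu : ψ (Φ u) = u := hΦs.localInverse_apply_image
  have hψd : HasFDerivAt ψ (ContinuousLinearMap.id ℝ (Par N)) (Φ u) := by
    have := hΦs.to_localInverse.hasFDerivAt
    simpa using this
  have hgd : HasFDerivAt (f ∘ ψ) (fderiv ℝ f u) (Φ u) := by
    have hfd : HasFDerivAt f (fderiv ℝ f u) (ψ (Φ u)) := by
      rw [hψu]; exact hf.hasFDerivAt
    have := hfd.comp (Φ u) hψd
    simpa using this
  have hLΦ : ∀ v, L (Φ v) = ρ v := by
    intro v
    simp only [hΦdef, _root_.map_add, _root_.map_smul, smul_eq_mul, hLz]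
    ring
  have hline : Tendsto (fun t : ℝ => Φ u + t • w) (𝓝 0) (𝓝 (Φ u)) := by
    have hcont : Continuous (fun t : ℝ => Φ u + t • w) := by continuity
    simpa using hcont.tendsto 0
  have hev : ∀ᶠ t : ℝ in 𝓝 0, (f ∘ ψ) (Φ u + t • w) = 0 := by
    have h1 : ∀ᶠ y in 𝓝 (Φ u), Φ (ψ y) = y := hΦs.eventually_right_inverse
    have h2 : ∀ᶠ y in 𝓝 (Φ u), ψ y ∈ Ω := by
      apply hΦs.localInverse_continuousAt.eventually_mem
      rw [← hψdef, hψu]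
      exact hΩ.mem_nhds hu
    filter_upwards [hline.eventually h1, hline.eventually h2] with t h1t h2t
    have hρψ : ρ (ψ (Φ u + t • w)) = 1 := by
      have h3 := hLΦ (ψ (Φ u + t • w))
      rw [h1t, _root_.map_add, _root_.map_smul, smul_eq_mul, hLΦ u, hρu, hw] at h3
      simpa using h3.symm
    exact hvanish _ h2t hρψ
  have hcurve : HasDerivAt (fun t : ℝ => Φ u + t • w) w 0 := by
    simpa using ((hasDerivAt_id (0:ℝ)).smul_const w).const_add (Φ u)
  have hcomp : HasDerivAt (fun t : ℝ => (f ∘ ψ) (Φ u + t • w)) (fderiv ℝ f u w) 0 := by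
    have hgd' : HasFDerivAt (f ∘ ψ) (fderiv ℝ f u) ((fun t : ℝ => Φ u + t • w) 0) := by
      simpa using hgd
    have := hgd'.comp_hasDerivAt 0 hcurve
    exact this
  have hzero : HasDerivAt (fun _ : ℝ => (0:E)) (fderiv ℝ f u w) 0 :=
    hcomp.congr_of_eventuallyEq (hev.mono fun t ht => ht.symm)
  exact ((hasDerivAt_const (0:ℝ) (0:E)).unique hzero).symm

end Aux

set_option maxHeartbeats 2000000 in
/-- Along the boundary of a hypersurface meeting the horosphere `{x_{n+1} = 1}` at
constant angle `θ`: `h(μ, μ) = H − sin θ Ĥ + (n−1) cos θ`, where `Ĥ` is the mean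
curvature of `∂M` inside the (flat) horosphere. -/
theorem stmt13 (n k : ℕ) (hnk : n = k + 1) (θ : ℝ) (hθ : θ ∈ Set.Ioo 0 Real.pi)
    (Ω : Set (Par n)) (hΩ : IsOpen Ω) (x ν νb μv : Par n → Vec n) (m : Par n → Par n)
    (hx : ContDiffOn ℝ (⊤ : ℕ∞) x Ω) (hν : ContDiffOn ℝ (⊤ : ℕ∞) ν Ω)
    (hUHS : ∀ u ∈ Ω, x u ∈ UHS n)
    (himm : ∀ u ∈ Ω, IsUnit (gmat x u).det)
    (hunit : ∀ u ∈ Ω, gbar (x u) (ν u) (ν u) = 1)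
    (hperp : ∀ u ∈ Ω, ∀ i, gbar (x u) (ν u) (pd i x u) = 0)
    (B : Set (Par n)) (hB : B = {u ∈ Ω | ht (x u) = 1})
    (htrans : ∀ u ∈ B, fderiv ℝ (fun v => ht (x v)) u ≠ 0)
    (hμ : ∀ u ∈ B, fderiv ℝ x u (m u) = μv u)
    (hμunit : ∀ u ∈ B, gbar (x u) (μv u) (μv u) = 1)
    (hμperp : ∀ u ∈ B, ∀ w : Par n, fderiv ℝ (fun v => ht (x v)) u w = 0 →
      gbar (x u) (fderiv ℝ x u w) (μv u) = 0)
    (hangle1 : ∀ u ∈ B, μv u = Real.sin θ • (-(elast n)) + Real.cos θ • νb u)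
    (hangle2 : ∀ u ∈ B, ν u = -Real.cos θ • (-(elast n)) + Real.sin θ • νb u)
    (u : Par n) (hu : u ∈ B)
    (hνbd : DifferentiableAt ℝ νb u)
    -- an orthonormal tangent frame of `∂M` at `u`
    (e : Fin k → Par n)
    (he_tan : ∀ i, fderiv ℝ (fun v => ht (x v)) u (e i) = 0)
    (he_on : ∀ i j, gbar (x u) (fderiv ℝ x u (e i)) (fderiv ℝ x u (e j))
      = if i = j then 1 else 0)
    (he_μ : ∀ i, gbar (x u) (fderiv ℝ x u (e i)) (μv u) = 0)
    -- the mean curvature of `∂M` in the flat horosphere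
    (Hhat : ℝ)
    (hHhat : Hhat = ∑ i, (inner ℝ (fderiv ℝ νb u (e i)) (fderiv ℝ x u (e i)) : ℝ)) :
    gbar (x u) (covDir x (m u) ν u) (μv u)
      = meanCurv x ν u - Real.sin θ * Hhat + ((n : ℝ) - 1) * Real.cos θ := by
  classical
  subst hnk
  have huB := hu
  rw [hB] at huB
  obtain ⟨huΩ, hx1⟩ := huB
  have hΩu : Ω ∈ nhds u := hΩ.mem_nhds huΩ
  have hxd : DifferentiableAt ℝ x u := (hx.contDiffAt hΩu).differentiableAt (by simp)
  have hνd : DifferentiableAt ℝ ν u := (hν.contDiffAt hΩu).differentiableAt (by simp)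
  have hgb : ∀ Y Z : Vec (k+1), gbar (x u) Y Z = (inner ℝ Y Z : ℝ) := by
    intro Y Z; rw [gbar, hx1]; norm_num
  -- last-coordinate chain rule
  have hproj : ∀ w : Par (k+1),
      fderiv ℝ (fun v => ht (x v)) u w = (fderiv ℝ x u w) (Fin.last (k+1)) := by
    intro w
    have hc := ((EuclideanSpace.proj (Fin.last (k+1)) : Vec (k+1) →L[ℝ] ℝ).hasFDerivAt
      (x := x u)).comp u hxd.hasFDerivAt
    have heq : (fun v => ht (x v))
        = (⇑(EuclideanSpace.proj (Fin.last (k+1)) : Vec (k+1) →L[ℝ] ℝ) ∘ x) := rfl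
    rw [heq, hc.fderiv]; rfl
  have hTlast : ∀ i, (fderiv ℝ x u (e i)) (Fin.last (k+1)) = 0 := fun i => by
    rw [← hproj]; exact he_tan i
  have hρc : ContDiffAt ℝ (⊤ : ℕ∞) (fun v => ht (x v)) u := by
    have h1 : ContDiff ℝ (⊤ : ℕ∞) (fun p : Vec (k+1) => ht p) :=
      (EuclideanSpace.proj (Fin.last (k+1)) : Vec (k+1) →L[ℝ] ℝ).contDiff
    exact h1.contDiffAt.comp u (hx.contDiffAt hΩu)
  -- tangential derivative of ν
  have hDνe : ∀ i, fderiv ℝ ν u (e i) = Real.sin θ • fderiv ℝ νb u (e i) := by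
    intro i
    have hfd : DifferentiableAt ℝ
        (fun v => ν v - Real.sin θ • νb v - Real.cos θ • elast (k+1)) u :=
      (hνd.sub (hνbd.const_smul (Real.sin θ))).sub (differentiableAt_const _)
    have hvan : ∀ v ∈ Ω, ht (x v) = 1 →
        (ν v - Real.sin θ • νb v - Real.cos θ • elast (k+1)) = 0 := by
      intro v hv hvt
      have hvB : v ∈ B := by rw [hB]; exact ⟨hv, hvt⟩
      rw [hangle2 v hvB]
      module
    have key := tang_deriv hΩ huΩ hρc hx1 (htrans u hu) hfd hvan (he_tan i)
    have hfder : fderiv ℝ (fun v => ν v - Real.sin θ • νb v - Real.cos θ • elast (k+1)) u (e i)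
        = fderiv ℝ ν u (e i) - Real.sin θ • fderiv ℝ νb u (e i) := by
      rw [fderiv_fun_sub (f := fun v => ν v - Real.sin θ • νb v) (hνd.sub (hνbd.const_smul (Real.sin θ))) (differentiableAt_const _),
        fderiv_fun_sub (g := fun v => Real.sin θ • νb v) hνd (hνbd.const_smul (Real.sin θ)), fderiv_fun_const_smul hνbd]
      simp
    rw [hfder] at key
    rw [sub_eq_zero] at key
    exact key
  -- Euclidean orthonormality facts
  have hνX : ∀ w : Par (k+1), (inner ℝ (ν u) (fderiv ℝ x u w) : ℝ) = 0 := by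
    intro w
    rw [clm_expand (fderiv ℝ x u) w, inner_sum]
    refine Finset.sum_eq_zero fun j _ => ?_
    rw [real_inner_smul_right]
    have hp := hperp u huΩ j
    rw [hgb] at hp
    simp only [pd] at hp
    rw [hp, mul_zero]
  have hTT : ∀ i j, (inner ℝ (fderiv ℝ x u (e i)) (fderiv ℝ x u (e j)) : ℝ)
      = if i = j then 1 else 0 := fun i j => by rw [← hgb]; exact he_on i j
  have hTμ : ∀ i, (inner ℝ (fderiv ℝ x u (e i)) (μv u) : ℝ) = 0 := fun i => by
    rw [← hgb]; exact he_μ i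
  have hXm : fderiv ℝ x u (m u) = μv u := hμ u hu
  have hμμ : (inner ℝ (μv u) (μv u) : ℝ) = 1 := by rw [← hgb]; exact hμunit u hu
  have hνν : (inner ℝ (ν u) (ν u) : ℝ) = 1 := by rw [← hgb]; exact hunit u huΩ
  have hμν : (inner ℝ (μv u) (ν u) : ℝ) = 0 := by
    rw [← hXm, real_inner_comm]; exact hνX (m u)
  -- Parseval : μ_last² + ν_last² = 1
  have hlastY : ∀ Y : Vec (k+1), (inner ℝ Y (elast (k+1)) : ℝ) = Y (Fin.last (k+1)) := by
    intro Y
    simp [elast, Ei, EuclideanSpace.inner_single_right]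
  have hkey : (μv u (Fin.last (k+1)))^2 + (ν u (Fin.last (k+1)))^2 = 1 := by
    set V : Fin k ⊕ Bool → Vec (k+1) :=
      Sum.elim (fun i => fderiv ℝ x u (e i))
        (fun j => if j then ν u else μv u) with hV
    have hV1 : ∀ i, V (Sum.inl i) = fderiv ℝ x u (e i) := fun i => rfl
    have hV2 : V (Sum.inr false) = μv u := rfl
    have hV3 : V (Sum.inr true) = ν u := rfl
    have hON : ∀ a c : Fin k ⊕ Bool, (inner ℝ (V a) (V c) : ℝ) = if a = c then 1 else 0 := by
      rintro (i | a) (j | c)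
      · rw [hV1, hV1, hTT i j]
        by_cases h : i = j <;> simp [h]
      · cases c
        · rw [hV1, hV2, hTμ i]; simp
        · rw [hV1, hV3, real_inner_comm, hνX (e i)]; simp
      · cases a
        · rw [hV2, hV1, real_inner_comm, hTμ j]; simp
        · rw [hV3, hV1, hνX (e j)]; simp
      · cases a <;> cases c
        · rw [hV2, hμμ]; simp
        · rw [hV2, hV3, hμν]; simp
        · rw [hV3, hV2, real_inner_comm, hμν]; simp
        · rw [hV3, hνν]; simp
    have hon : Orthonormal ℝ V := orthonormal_iff_ite.mpr hON
    have hcard : Fintype.card (Fin k ⊕ Bool) = Module.finrank ℝ (Vec (k+1)) := by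
      simp [finrank_euclideanSpace]
    let bV : Module.Basis (Fin k ⊕ Bool) ℝ (Vec (k+1)) :=
      basisOfLinearIndependentOfCardEqFinrank hon.linearIndependent hcard
    have hbV : ⇑bV = V := coe_basisOfLinearIndependentOfCardEqFinrank _ _
    let onb : OrthonormalBasis (Fin k ⊕ Bool) ℝ (Vec (k+1)) :=
      bV.toOrthonormalBasis (by rwa [hbV])
    have honb : ⇑onb = V := by
      rw [Module.Basis.coe_toOrthonormalBasis, hbV]
    have hexp := onb.sum_repr' (elast (k+1))
    have h2 := congrArg (fun Y : Vec (k+1) => (inner ℝ Y (elast (k+1)) : ℝ)) hexp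
    simp only [sum_inner, real_inner_smul_left, honb] at h2
    rw [Fintype.sum_sum_type] at h2
    have helast : (inner ℝ (elast (k+1)) (elast (k+1)) : ℝ) = 1 := by
      rw [hlastY]; simp [elast, Ei, EuclideanSpace.single_apply]
    rw [helast] at h2
    have hz : ∀ i : Fin k, (inner ℝ (V (Sum.inl i)) (elast (k+1)) : ℝ)
        * (inner ℝ (V (Sum.inl i)) (elast (k+1)) : ℝ) = 0 := by
      intro i
      simp only [V, Sum.elim_inl]
      rw [hlastY, hTlast i, mul_zero]
    rw [Finset.sum_congr rfl (fun i _ => hz i), Finset.sum_const_zero, zero_add,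
      Fintype.sum_bool, hV3, hV2, hlastY, hlastY] at h2
    nlinarith [h2]
  have hμl : μv u (Fin.last (k+1))
      = -Real.sin θ + Real.cos θ * νb u (Fin.last (k+1)) := by
    have h := congrArg (fun Y : Vec (k+1) => Y (Fin.last (k+1))) (hangle1 u hu)
    simpa [elast, Ei, PiLp.add_apply, PiLp.smul_apply, PiLp.neg_apply,
      EuclideanSpace.single_apply] using h
  have hνl : ν u (Fin.last (k+1))
      = Real.cos θ + Real.sin θ * νb u (Fin.last (k+1)) := by
    have h := congrArg (fun Y : Vec (k+1) => Y (Fin.last (k+1))) (hangle2 u hu)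
    simpa [elast, Ei, PiLp.add_apply, PiLp.smul_apply, PiLp.neg_apply,
      EuclideanSpace.single_apply] using h
  have hνlast : ν u (Fin.last (k+1)) = Real.cos θ := by
    have hsc := Real.sin_sq_add_cos_sq θ
    have hsq : (νb u (Fin.last (k+1)))^2 = 0 := by
      rw [hμl, hνl] at hkey
      linear_combination hkey - (1 + (νb u (Fin.last (k+1)))^2) * hsc
    have : νb u (Fin.last (k+1)) = 0 := by
      exact pow_eq_zero_iff (two_ne_zero) |>.mp hsq
    rw [hνl, this]; ring
  -- the shape-operator CLM
  set C : Par (k+1) →L[ℝ] Vec (k+1) :=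
    fderiv ℝ ν u
      - ((EuclideanSpace.proj (Fin.last (k+1)) : Vec (k+1) →L[ℝ] ℝ).comp
          (fderiv ℝ x u)).smulRight (ν u)
      - (ν u (Fin.last (k+1))) • (fderiv ℝ x u)
      + ((innerSL ℝ (ν u)).comp (fderiv ℝ x u)).smulRight (elast (k+1)) with hCdef
  have hC : ∀ w, covDir x w ν u = C w := by
    intro w
    simp only [covDir, hCdef, hx1, div_one, ContinuousLinearMap.add_apply,
      ContinuousLinearMap.sub_apply, ContinuousLinearMap.smulRight_apply,
      ContinuousLinearMap.comp_apply, ContinuousLinearMap.coe_smul', Pi.smul_apply,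
      innerSL_apply_apply, PiLp.proj_apply]
    rw [real_inner_comm]
  -- bilinear expansion
  have hbil : ∀ (L1 : Par (k+1) →L[ℝ] Vec (k+1)) (w w' : Par (k+1)),
      (inner ℝ (L1 w) (fderiv ℝ x u w') : ℝ)
        = ∑ i, ∑ j, w i * w' j *
          (inner ℝ (L1 (EuclideanSpace.single i 1))
            (fderiv ℝ x u (EuclideanSpace.single j 1)) : ℝ) := by
    intro L1 w w'
    rw [clm_expand L1 w, clm_expand (fderiv ℝ x u) w', sum_inner]
    refine Finset.sum_congr rfl fun i _ => ?_
    rw [real_inner_smul_left, inner_sum, Finset.mul_sum]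
    refine Finset.sum_congr rfl fun j _ => ?_
    rw [real_inner_smul_right]; ring
  -- matrices
  set b : Fin (k+1) → Par (k+1) := Fin.snoc e (m u) with hbdef
  set P : Matrix (Fin (k+1)) (Fin (k+1)) ℝ := Matrix.of fun i a => b a i with hPdef
  have hPentry : ∀ (Mm : Matrix (Fin (k+1)) (Fin (k+1)) ℝ) (a c : Fin (k+1)),
      (P.transpose * Mm * P) a c = ∑ i, ∑ j, b a i * b c j * Mm i j := by
    intro Mm a c
    simp only [Matrix.mul_apply, Matrix.transpose_apply, hPdef, Matrix.of_apply]
    rw [Finset.sum_comm]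
    refine Finset.sum_congr rfl fun i _ => ?_
    rw [Finset.sum_mul]
    refine Finset.sum_congr rfl fun j _ => ?_
    ring
  have hGm : ∀ i j, gmat x u i j
      = (inner ℝ (fderiv ℝ x u (EuclideanSpace.single i 1))
          (fderiv ℝ x u (EuclideanSpace.single j 1)) : ℝ) := by
    intro i j
    simp only [gmat, Matrix.of_apply, pd]
    exact hgb _ _
  have hHm : ∀ i j, hmat x ν u i j
      = (inner ℝ (C (EuclideanSpace.single i 1))
          (fderiv ℝ x u (EuclideanSpace.single j 1)) : ℝ) := by
    intro i j
    simp only [hmat, Matrix.of_apply, pd]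
    rw [hgb, hC]
  have hGentry : ∀ a c, (P.transpose * gmat x u * P) a c
      = (inner ℝ (fderiv ℝ x u (b a)) (fderiv ℝ x u (b c)) : ℝ) := by
    intro a c
    rw [hPentry, hbil (fderiv ℝ x u) (b a) (b c)]
    exact Finset.sum_congr rfl fun i _ => Finset.sum_congr rfl fun j _ => by rw [hGm]
  have hHentry : ∀ a c, (P.transpose * hmat x ν u * P) a c
      = (inner ℝ (C (b a)) (fderiv ℝ x u (b c)) : ℝ) := by
    intro a c
    rw [hPentry, hbil C (b a) (b c)]
    exact Finset.sum_congr rfl fun i _ => Finset.sum_congr rfl fun j _ => by rw [hHm]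
  have hb_cast : ∀ i : Fin k, b (Fin.castSucc i) = e i := fun i => by
    simp [hbdef]
  have hb_last : b (Fin.last k) = m u := by
    simp [hbdef]
  have hPGP : P.transpose * gmat x u * P = 1 := by
    ext a c
    rw [hGentry]
    induction a using Fin.lastCases with
    | last =>
      induction c using Fin.lastCases with
      | last =>
        rw [hb_last, hXm, hμμ, Matrix.one_apply_eq]
      | cast j =>
        rw [hb_last, hb_cast, hXm, real_inner_comm, hTμ j,
          Matrix.one_apply_ne (Fin.castSucc_lt_last j).ne']
    | cast i =>
      induction c using Fin.lastCases with
      | last =>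
        rw [hb_last, hb_cast, hXm, hTμ i,
          Matrix.one_apply_ne (Fin.castSucc_lt_last i).ne]
      | cast j =>
        rw [hb_cast, hb_cast, hTT i j, Matrix.one_apply]
        simp [Fin.castSucc_inj]
  -- trace identity
  have htr : meanCurv x ν u
      = (inner ℝ (C (m u)) (fderiv ℝ x u (m u)) : ℝ)
        + ∑ i : Fin k, (inner ℝ (C (e i)) (fderiv ℝ x u (e i)) : ℝ) := by
    rw [meanCurv, trace_aux (gmat x u) (hmat x ν u) P hPGP, Matrix.trace]
    have hdiag : ∀ a, (P.transpose * hmat x ν u * P).diag a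
        = (inner ℝ (C (b a)) (fderiv ℝ x u (b a)) : ℝ) := fun a => hHentry a a
    rw [Finset.sum_congr rfl (fun a _ => hdiag a), Fin.sum_univ_castSucc]
    simp only [hb_cast, hb_last]
    ring
  -- evaluate boundary terms
  have hCe : ∀ i : Fin k, (inner ℝ (C (e i)) (fderiv ℝ x u (e i)) : ℝ)
      = Real.sin θ * (inner ℝ (fderiv ℝ νb u (e i)) (fderiv ℝ x u (e i)) : ℝ)
        - Real.cos θ := by
    intro i
    have h1 : C (e i) = fderiv ℝ ν u (e i)
        - ((fderiv ℝ x u (e i)) (Fin.last (k+1))) • ν u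
        - (ν u (Fin.last (k+1))) • fderiv ℝ x u (e i)
        + (inner ℝ (ν u) (fderiv ℝ x u (e i)) : ℝ) • elast (k+1) := by
      simp only [hCdef, ContinuousLinearMap.add_apply, ContinuousLinearMap.sub_apply,
        ContinuousLinearMap.smulRight_apply, ContinuousLinearMap.comp_apply,
        ContinuousLinearMap.coe_smul', Pi.smul_apply, innerSL_apply_apply,
        PiLp.proj_apply]
    rw [h1, hTlast i, hνX (e i), hνlast, hDνe i]
    rw [inner_add_left, inner_sub_left, inner_sub_left, real_inner_smul_left,
      real_inner_smul_left, real_inner_smul_left, real_inner_smul_left, hTT i i]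
    simp
  -- final assembly
  rw [hgb, hC, ← hXm, htr, hHhat]
  rw [Finset.sum_congr rfl (fun i (_ : i ∈ Finset.univ) => hCe i)]
  rw [Finset.sum_sub_distrib, Finset.sum_const, Finset.card_univ, Fintype.card_fin,
    ← Finset.mul_sum]
  push_cast
  ring
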